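/- Let $\hat\theta_1,\dots,\hat\theta_K$ be real-valued random variables (estimators of a real number $\theta$) such that $\mathbb{P}(|\hat\theta_k - \theta| \le w) \ge 1-\alpha$ for each $k$, for some constant $w > 0$. Then the sample median $\hat\theta_{(\lceil K/2 \rceil)}$ of $\hat\theta_1,\dots,\hat\theta_K$ satisfies $\mathbb{P}(|\hat\theta_{(\lceil K/2 \rceil)} - \theta| \le w) \ge 1-2\alpha$. -/

import Mathlib

/-!
If the median misses `θ` by more than `w`, say from above, then the at least `K/2` values lying
above the median all miss `θ` by more than `w` too; symmetrically from below. So the median fails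
only on the event that at least half of the `K` failure events occur. The expected number of
failures is at most `Kα` by linearity of expectation, whatever the dependence between the
estimators, and Markov's inequality bounds the probability of at least `K/2` failures by `2α`.
-/

open MeasureTheory

/-- The `⌈K/2⌉`-th smallest value (1-indexed) among `c 0, …, c (K-1)`. -/
noncomputable def medianOf {K : ℕ} (c : Fin K → ℝ) : ℝ :=
  (Multiset.sort (Multiset.ofList (List.ofFn c)) (· ≤ ·)).getD ((K + 1) / 2 - 1) 0

open Finset
open scoped ENNReal

namespace List

variable {α : Type*} [Preorder α] [DecidableLE α] {l : List α}

theorem SortedLE.succ_le_countP_le_getElem (hl : l.SortedLE) {i : ℕ} (hi : i < l.length) :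
    i + 1 ≤ l.countP (· ≤ l[i]) := by
  have hall : ∀ a ∈ l.take (i + 1), a ≤ l[i] := by
    intro a ha
    obtain ⟨j, hj, rfl⟩ := mem_take_iff_getElem.mp ha
    exact hl.getElem_le_getElem_of_le (by omega)
  calc i + 1 = (l.take (i + 1)).countP (· ≤ l[i]) := by
        rw [countP_eq_length.mpr (by simpa using hall), length_take]; omega
    _ ≤ l.countP (· ≤ l[i]) := (take_sublist _ _).countP_le

theorem SortedLE.length_sub_le_countP_getElem_le (hl : l.SortedLE) {i : ℕ} (hi : i < l.length) :
    l.length - i ≤ l.countP (l[i] ≤ ·) := by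
  have hall : ∀ a ∈ l.drop i, l[i] ≤ a := by
    intro a ha
    obtain ⟨j, hj, rfl⟩ := mem_drop_iff_getElem.mp ha
    exact hl.getElem_le_getElem_of_le (by omega)
  calc l.length - i = (l.drop i).countP (l[i] ≤ ·) := by
        rw [countP_eq_length.mpr (by simpa using hall), length_drop]
    _ ≤ l.countP (l[i] ≤ ·) := (drop_sublist _ _).countP_le

end List

section Median

variable {K : ℕ} (c : Fin K → ℝ)

noncomputable def orderStatistics : List ℝ := Multiset.sort (List.ofFn c : Multiset ℝ) (· ≤ ·)

theorem length_orderStatistics : (orderStatistics c).length = K := by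
  simp [orderStatistics]

theorem sortedLE_orderStatistics : (orderStatistics c).SortedLE :=
  (Multiset.pairwise_sort _ _).sortedLE

theorem countP_orderStatistics (p : ℝ → Prop) [DecidablePred p] :
    (orderStatistics c).countP (p ·) = #{k | p (c k)} := by
  rw [orderStatistics, ← Multiset.coe_countP, Multiset.sort_eq, List.ofFn_eq_map,
    ← Multiset.map_coe, Multiset.countP_map]
  rfl

theorem median_index_lt_length (hK : K ≠ 0) : (K + 1) / 2 - 1 < (orderStatistics c).length := by
  rw [length_orderStatistics]; omega

theorem medianOf_eq_getElem (hK : K ≠ 0) :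
    medianOf c = (orderStatistics c)[(K + 1) / 2 - 1]'(median_index_lt_length c hK) :=
  List.getD_eq_getElem _ _ _

theorem le_two_mul_card_le_medianOf : K ≤ 2 * #{k | c k ≤ medianOf c} := by
  rcases eq_or_ne K 0 with rfl | hK
  · simp
  have hcount :=
    (sortedLE_orderStatistics c).succ_le_countP_le_getElem (median_index_lt_length c hK)
  rw [medianOf_eq_getElem c hK, ← countP_orderStatistics c (· ≤ _)]
  omega

theorem le_two_mul_card_medianOf_le : K ≤ 2 * #{k | medianOf c ≤ c k} := by
  rcases eq_or_ne K 0 with rfl | hK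
  · simp
  have hcount :=
    (sortedLE_orderStatistics c).length_sub_le_countP_getElem_le (median_index_lt_length c hK)
  rw [length_orderStatistics] at hcount
  rw [medianOf_eq_getElem c hK, ← countP_orderStatistics c (_ ≤ ·)]
  omega

theorem le_two_mul_card_lt_abs_sub_of_lt_abs_medianOf_sub {θ w : ℝ}
    (h : w < |medianOf c - θ|) : K ≤ 2 * #{k | w < |c k - θ|} := by
  rcases lt_abs.mp h with h | h
  · refine (le_two_mul_card_medianOf_le c).trans (Nat.mul_le_mul_left 2 (card_le_card ?_))
    intro k hk
    simp only [mem_filter_univ] at hk ⊢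
    exact lt_abs.mpr (Or.inl (by linarith))
  · refine (le_two_mul_card_le_medianOf c).trans (Nat.mul_le_mul_left 2 (card_le_card ?_))
    intro k hk
    simp only [mem_filter_univ] at hk ⊢
    exact lt_abs.mpr (Or.inr (by linarith))

end Median

theorem measure_compl_le_ofReal {Ω : Type*} [MeasurableSpace Ω] {μ : Measure Ω}
    [IsProbabilityMeasure μ] {s : Set Ω} (hs : MeasurableSet s) {α : ℝ}
    (h : ENNReal.ofReal (1 - α) ≤ μ s) : μ sᶜ ≤ ENNReal.ofReal α := by
  rw [prob_compl_eq_one_sub hs, tsub_le_iff_right]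
  calc 1 = ENNReal.ofReal (α + (1 - α)) := by simp
    _ ≤ ENNReal.ofReal α + ENNReal.ofReal (1 - α) := ENNReal.ofReal_add_le
    _ ≤ ENNReal.ofReal α + μ s := by gcongr

section CountingEvents

variable {Ω ι : Type*} [Fintype ι] {B : ι → Set Ω} [∀ i, DecidablePred (· ∈ B i)]

theorem card_mem_eq_sum_indicator (ω : Ω) :
    (#{i | ω ∈ B i} : ℝ≥0∞) = ∑ i, (B i).indicator 1 ω := by
  rw [card_filter]
  push_cast
  simp only [Set.indicator_apply, Pi.one_apply]

variable [MeasurableSpace Ω] (μ : Measure Ω)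

theorem lintegral_card_mem (hB : ∀ i, MeasurableSet (B i)) :
    ∫⁻ ω, (#{i | ω ∈ B i} : ℝ≥0∞) ∂μ = ∑ i, μ (B i) := by
  simp_rw [card_mem_eq_sum_indicator]
  rw [lintegral_finsetSum _ fun i _ => measurable_one.indicator (hB i)]
  simp_rw [lintegral_indicator_one (hB _)]

theorem measure_le_two_mul_card_mem_le [Nonempty ι] (hB : ∀ i, MeasurableSet (B i)) {ε : ℝ≥0∞}
    (h : ∀ i, μ (B i) ≤ ε) : μ {ω | Fintype.card ι ≤ 2 * #{i | ω ∈ B i}} ≤ 2 * ε := by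
  have hcount : Measurable fun ω => (#{i | ω ∈ B i} : ℝ≥0∞) := by
    simp_rw [card_mem_eq_sum_indicator]
    exact measurable_sum _ fun i _ => measurable_one.indicator (hB i)
  have markov := mul_meas_ge_le_lintegral₀ (μ := μ) (hcount.const_mul 2).aemeasurable
    (Fintype.card ι)
  rw [lintegral_const_mul _ hcount, lintegral_card_mem μ hB] at markov
  have hK : (Fintype.card ι : ℝ≥0∞) ≠ 0 := by simp
  refine (ENNReal.mul_le_mul_iff_right hK (ENNReal.natCast_ne_top _)).mp ?_
  calc (Fintype.card ι : ℝ≥0∞) * μ {ω | Fintype.card ι ≤ 2 * #{i | ω ∈ B i}}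
      = Fintype.card ι * μ {ω | (Fintype.card ι : ℝ≥0∞) ≤ 2 * #{i | ω ∈ B i}} := by norm_cast
    _ ≤ 2 * ∑ i, μ (B i) := markov
    _ ≤ 2 * ∑ _i : ι, ε := by gcongr with i; exact h i
    _ = Fintype.card ι * (2 * ε) := by simp; ring

end CountingEvents

theorem median_estimator_concentration_general {Ω : Type*} [MeasurableSpace Ω]
    (μ : Measure Ω) [IsProbabilityMeasure μ]
    (K : ℕ) (hK : 2 ≤ K) (α : ℝ) (hα0 : 0 ≤ α)
    (θ : ℝ) (w : ℝ)
    (θhat : Fin K → Ω → ℝ)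
    (hmeas : ∀ k, Measurable (θhat k))
    (hcov : ∀ k, ENNReal.ofReal (1 - α) ≤ μ {ω | |θhat k ω - θ| ≤ w}) :
    ENNReal.ofReal (1 - 2 * α) ≤
      μ {ω | |medianOf (fun k => θhat k ω) - θ| ≤ w} := by
  have : Nonempty (Fin K) := ⟨⟨0, by omega⟩⟩
  have hbad : ∀ k, μ {ω | w < |θhat k ω - θ|} ≤ ENNReal.ofReal α := fun k => by
    simpa only [Set.compl_ofPred, not_le] using measure_compl_le_ofReal
      (measurableSet_le ((hmeas k).sub_const θ).abs measurable_const) (hcov k)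
  have hmedian_bad : μ {ω | w < |medianOf (fun k => θhat k ω) - θ|} ≤ 2 * ENNReal.ofReal α :=
    calc _ ≤ μ {ω | Fintype.card (Fin K) ≤ 2 * #{k | ω ∈ {ω | w < |θhat k ω - θ|}}} :=
          measure_mono fun ω => by
            simpa using le_two_mul_card_lt_abs_sub_of_lt_abs_medianOf_sub _
      _ ≤ 2 * ENNReal.ofReal α := measure_le_two_mul_card_mem_le μ
          (fun k => measurableSet_lt measurable_const ((hmeas k).sub_const θ).abs) hbad
  calc ENNReal.ofReal (1 - 2 * α) = 1 - 2 * ENNReal.ofReal α := by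
        rw [ENNReal.ofReal_sub _ (by positivity), ENNReal.ofReal_mul zero_le_two]; simp
    _ ≤ 1 - μ {ω | w < |medianOf (fun k => θhat k ω) - θ|} := tsub_le_tsub_left hmedian_bad 1
    _ ≤ μ {ω | |medianOf (fun k => θhat k ω) - θ| ≤ w} := by
        rw [tsub_le_iff_right, ← measure_univ (μ := μ)]
        simpa only [Set.compl_ofPred, not_le] using
          measure_univ_le_add_compl (μ := μ) {ω | |medianOf (fun k => θhat k ω) - θ| ≤ w}

/-- Derandomization of point estimators: if each of `K` (arbitrarily dependent)
estimators is within `w` of `θ` with probability at least `1-α`, then their sample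
median is within `w` of `θ` with probability at least `1-2α`. -/
theorem median_estimator_concentration {Ω : Type*} [MeasurableSpace Ω]
    (μ : Measure Ω) [IsProbabilityMeasure μ]
    (K : ℕ) (hK : 2 ≤ K) (α : ℝ) (hα0 : 0 ≤ α) (hα1 : α ≤ 1)
    (θ : ℝ) (w : ℝ) (hw : 0 < w)
    (θhat : Fin K → Ω → ℝ)
    (hmeas : ∀ k, Measurable (θhat k))
    (hcov : ∀ k, ENNReal.ofReal (1 - α) ≤ μ {ω | |θhat k ω - θ| ≤ w}) :
    ENNReal.ofReal (1 - 2 * α) ≤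
      μ {ω | |medianOf (fun k => θhat k ω) - θ| ≤ w} :=
  median_estimator_concentration_general μ K hK α hα0 θ w θhat hmeas hcov
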